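/- Best-first enumeration by relative plan quality is complete: every root-to-leaf path with quality at least q is eventually emitted, assuming stems below quality q are pruned and emission continues until the queue empties. -/

import Mathlib

/-!
Invariant: the target path ψ has been emitted, or some open stem is a prefix of ψ. When that stem
is popped it is either emitted, and then it is ψ itself (a proper prefix of ψ cannot end at a
leaf), or expanded, and then its extension by the next node of ψ is pushed: every factor
`Q b / maxQ Q C a` of the quality lies in `[0, 1]`, so quality is antitone under extension and
that extension, a prefix of ψ, still has quality at least `q`. Once the open multiset is empty only
the first alternative is left.
-/

variable {Node : Type*} [DecidableEq Node]

noncomputable def maxQ (Q : Node → ℝ) (C : Node → Finset Node) (σ : Node) : ℝ :=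
  (C σ).fold max 0 Q

noncomputable def planQ (Q : Node → ℝ) (C : Node → Finset Node) : List Node → ℝ
  | [] => 1
  | [_] => 1
  | a :: b :: rest => (Q b / maxQ Q C a) * planQ Q C (b :: rest)

open Classical in
/-- One step of best-first enumeration with quality pruning: pop a
maximum-quality stem; if it ends at a leaf, emit it; otherwise push exactly
those child extensions whose quality is at least q. -/
inductive PrunedStep (Q : Node → ℝ) (C : Node → Finset Node) (q : ℝ) :
    Multiset (List Node) × List (List Node) →
    Multiset (List Node) × List (List Node) → Prop
  | emit (O : Multiset (List Node)) (E : List (List Node)) (π : List Node) (l : Node)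
      (hmem : π ∈ O) (hmax : ∀ ψ ∈ O, planQ Q C ψ ≤ planQ Q C π)
      (hlast : π.getLast? = some l) (hleaf : C l = ∅) :
      PrunedStep Q C q (O, E) (O.erase π, E ++ [π])
  | expand (O : Multiset (List Node)) (E : List (List Node)) (π : List Node) (l : Node)
      (hmem : π ∈ O) (hmax : ∀ ψ ∈ O, planQ Q C ψ ≤ planQ Q C π)
      (hlast : π.getLast? = some l) (hne : (C l).Nonempty) :
      PrunedStep Q C q (O, E)
        (O.erase π +
          (((C l).filter fun c => q ≤ planQ Q C (π ++ [c])).val.map fun c => π ++ [c]), E)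

section Quality

variable {α : Type*} {Q : α → ℝ} {C : α → Finset α}

theorem maxQ_nonneg (a : α) : 0 ≤ maxQ Q C a :=
  Finset.le_fold_max _ |>.mpr (Or.inl le_rfl)

theorem le_maxQ {a b : α} (hb : b ∈ C a) : Q b ≤ maxQ Q C a :=
  Finset.le_fold_max _ |>.mpr (Or.inr ⟨b, hb, le_rfl⟩)

theorem planQ_nonneg (hQ : ∀ a, 0 ≤ Q a) : ∀ l : List α, 0 ≤ planQ Q C l
  | [] | [_] => zero_le_one
  | _ :: b :: rest =>
    mul_nonneg (div_nonneg (hQ b) (maxQ_nonneg _)) (planQ_nonneg hQ (b :: rest))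

theorem planQ_le_one (hQ : ∀ a, 0 ≤ Q a) :
    ∀ l : List α, l.IsChain (fun a b => b ∈ C a) → planQ Q C l ≤ 1
  | [], _ | [_], _ => le_rfl
  | a :: b :: rest, h => by
    rw [List.isChain_cons_cons] at h
    exact mul_le_one₀ (div_le_one_of_le₀ (le_maxQ h.1) (maxQ_nonneg a))
      (planQ_nonneg hQ _) (planQ_le_one hQ _ h.2)

theorem planQ_append_cons (xs ys : List α) (a : α) :
    planQ Q C (xs ++ a :: ys) = planQ Q C (xs ++ [a]) * planQ Q C (a :: ys) := by
  induction xs with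
  | nil => simp [planQ]
  | cons x xs ih =>
    cases xs with
    | nil => simp [planQ]
    | cons y xs => simp only [List.cons_append, planQ] at ih ⊢; rw [ih, mul_assoc]

theorem planQ_append_le (hQ : ∀ a, 0 ≤ Q a) {π : List α} (hπ : π ≠ []) (ys : List α)
    (hchain : (π ++ ys).IsChain (fun a b => b ∈ C a)) : planQ Q C (π ++ ys) ≤ planQ Q C π := by
  obtain ⟨xs, a, rfl⟩ := List.eq_nil_or_concat' π |>.resolve_left hπ
  rw [List.append_assoc, List.singleton_append, planQ_append_cons]
  have htail : (a :: ys).IsChain (fun a b => b ∈ C a) := by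
    rw [List.append_assoc, List.singleton_append] at hchain
    exact hchain.right_of_append
  exact mul_le_of_le_one_right (planQ_nonneg hQ _) (planQ_le_one hQ _ htail)

theorem planQ_le_of_prefix (hQ : ∀ a, 0 ≤ Q a) {π ψ : List α} (hπ : π ≠ []) (hp : π <+: ψ)
    (hchain : ψ.IsChain (fun a b => b ∈ C a)) : planQ Q C ψ ≤ planQ Q C π := by
  obtain ⟨ys, rfl⟩ := hp
  exact planQ_append_le hQ hπ ys hchain

end Quality

theorem exists_child_prefix {α : Type*} {C : α → Finset α} {π ψ : List α} {l : α}
    (hp : π <+: ψ) (hne : π ≠ ψ) (hlast : π.getLast? = some l)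
    (hchain : ψ.IsChain (fun a b => b ∈ C a)) : ∃ c ∈ C l, π ++ [c] <+: ψ := by
  obtain ⟨_ | ⟨c, rest⟩, rfl⟩ := hp
  · exact (hne (List.append_nil π).symm).elim
  · exact ⟨c, (List.isChain_append.mp hchain).2.2 l hlast c rfl, rest, by simp⟩

def EmittedOrPending (ψ : List Node) (s : Multiset (List Node) × List (List Node)) : Prop :=
  ψ ∈ s.2 ∨ ∃ π ∈ s.1, π <+: ψ

section Enumeration

variable {Q : Node → ℝ} {C : Node → Finset Node} {q : ℝ} {ψ : List Node}

theorem PrunedStep.emittedOrPending (hQ : ∀ a, 0 ≤ Q a)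
    (hchain : ψ.IsChain (fun a b => b ∈ C a)) (hleaf : ∃ l, ψ.getLast? = some l ∧ C l = ∅)
    (hq : q ≤ planQ Q C ψ) {s t : Multiset (List Node) × List (List Node)}
    (hstep : PrunedStep Q C q s t) (hs : EmittedOrPending ψ s) : EmittedOrPending ψ t := by
  rcases hs with hemitted | ⟨σ, hσ, hσψ⟩
  · cases hstep with
    | emit => exact Or.inl (List.mem_append_left _ hemitted)
    | expand => exact Or.inl hemitted
  cases hstep with
  | emit _ _ π l _ _ hlast hl =>
    by_cases hσπ : σ = π
    · subst hσπ
      refine Or.inl (List.mem_append_right _ (List.mem_singleton.mpr ?_))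
      by_contra hψσ
      obtain ⟨c, hc, -⟩ := exists_child_prefix hσψ (Ne.symm hψσ) hlast hchain
      simp [hl] at hc
    · exact Or.inr ⟨σ, (Multiset.mem_erase_of_ne hσπ).mpr hσ, hσψ⟩
  | expand _ _ π l _ _ hlast hne =>
    by_cases hσπ : σ = π
    · subst hσπ
      have hσne : σ ≠ ψ := by
        rintro rfl
        obtain ⟨l', hl', hC⟩ := hleaf
        obtain rfl : l = l' := Option.some.inj (hlast.symm.trans hl')
        exact hne.ne_empty hC
      obtain ⟨c, hc, hpre⟩ := exists_child_prefix hσψ hσne hlast hchain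
      have hqc : q ≤ planQ Q C (σ ++ [c]) :=
        hq.trans (planQ_le_of_prefix hQ (by simp) hpre hchain)
      refine Or.inr ⟨σ ++ [c], Multiset.mem_add.mpr (Or.inr ?_), hpre⟩
      exact Multiset.mem_map.mpr ⟨c, Finset.mem_filter.mpr ⟨hc, hqc⟩, rfl⟩
    · exact Or.inr ⟨σ, Multiset.mem_add.mpr
        (Or.inl ((Multiset.mem_erase_of_ne hσπ).mpr hσ)), hσψ⟩

theorem PrunedStep.emittedOrPending_of_reflTransGen (hQ : ∀ a, 0 ≤ Q a)
    (hchain : ψ.IsChain (fun a b => b ∈ C a)) (hleaf : ∃ l, ψ.getLast? = some l ∧ C l = ∅)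
    (hq : q ≤ planQ Q C ψ) {s t : Multiset (List Node) × List (List Node)}
    (hrun : Relation.ReflTransGen (PrunedStep Q C q) s t) (hs : EmittedOrPending ψ s) :
    EmittedOrPending ψ t := by
  induction hrun with
  | refl => exact hs
  | tail _ hstep ih => exact hstep.emittedOrPending hQ hchain hleaf hq ih

end Enumeration

/-- Best-first enumeration with pruning is complete: once the open list is
empty, every root-to-leaf path of quality at least q has been emitted. -/
theorem best_first_complete (Q : Node → ℝ) (C : Node → Finset Node) (q : ℝ)
    (hpos : ∀ σ, 0 < Q σ) (root : Node)
    (E : List (List Node))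
    (hrun : Relation.ReflTransGen (PrunedStep Q C q)
      (({[root]} : Multiset (List Node)), ([] : List (List Node)))
      ((0 : Multiset (List Node)), E))
    (ψ : List Node) (hhead : ψ.head? = some root)
    (hchain : List.Chain' (fun a b => b ∈ C a) ψ)
    (hleaf : ∃ l, ψ.getLast? = some l ∧ C l = ∅)
    (hq : q ≤ planQ Q C ψ) :
    ψ ∈ E := by
  obtain ⟨rest, rfl⟩ := List.head?_eq_some_iff.mp hhead
  have hstart : EmittedOrPending (root :: rest) ({[root]}, []) :=
    Or.inr ⟨[root], Multiset.mem_singleton_self _, rest, rfl⟩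
  rcases PrunedStep.emittedOrPending_of_reflTransGen (fun a => (hpos a).le) hchain hleaf hq hrun
    hstart with hemitted | ⟨π, hπ, -⟩
  · exact hemitted
  · exact absurd hπ (Multiset.notMem_zero π)
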